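/- Let V be a variety with 0⃗ and 1⃗ having Boolean factor congruences (BFC), A ∈ V, e⃗, f⃗ ∈ Z(A) and a⃗ ∈ Aⁿ. Then a⃗ = e⃗ ∨ f⃗ (the supremum in the center) if and only if [1⃗,a⃗] ∈ θ_{1,e} and [a⃗,f⃗] ∈ θ_{0,e}. -/
import Mathlib


open FirstOrder FirstOrder.Language FirstOrder.Language.Structure

universe u v w

namespace Paper

variable {L : FirstOrder.Language.{0, 0}}

/-- A congruence on an `L`-algebra: an equivalence relation compatible with all operations. -/
structure AlgCon (L : FirstOrder.Language.{0, 0}) (A : Type u) [L.Structure A] where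
  r : A → A → Prop
  refl : ∀ a, r a a
  symm : ∀ {a b}, r a b → r b a
  trans : ∀ {a b c}, r a b → r b c → r a c
  compat : ∀ {m : ℕ} (f : L.Functions m) (x y : Fin m → A),
    (∀ i, r (x i) (y i)) → r (funMap f x) (funMap f y)

namespace AlgCon

variable {A : Type u} [L.Structure A]

theorem ext' {c d : AlgCon L A} (h : ∀ a b, c.r a b ↔ d.r a b) : c = d := by
  cases c; cases d
  simp only [AlgCon.mk.injEq]
  funext a b
  exact propext (h a b)

/-- The identity (diagonal) congruence Δ. -/
def delta (L : FirstOrder.Language.{0, 0}) (A : Type u) [L.Structure A] : AlgCon L A where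
  r := Eq
  refl := fun _ => rfl
  symm := fun h => h.symm
  trans := fun h1 h2 => h1.trans h2
  compat := fun f x y h => by rw [funext h]

/-- The universal congruence ∇. -/
def nabla (L : FirstOrder.Language.{0, 0}) (A : Type u) [L.Structure A] : AlgCon L A where
  r := fun _ _ => True
  refl := fun _ => trivial
  symm := fun _ => trivial
  trans := fun _ _ => trivial
  compat := fun _ _ _ _ => trivial

/-- Meet (intersection) of congruences. -/
def inf (c d : AlgCon L A) : AlgCon L A where
  r := fun a b => c.r a b ∧ d.r a b
  refl := fun a => ⟨c.refl a, d.refl a⟩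
  symm := fun h => ⟨c.symm h.1, d.symm h.2⟩
  trans := fun h1 h2 => ⟨c.trans h1.1 h2.1, d.trans h1.2 h2.2⟩
  compat := fun f x y h =>
    ⟨c.compat f x y fun i => (h i).1, d.compat f x y fun i => (h i).2⟩

/-- Relational composition of congruences (as a binary relation). -/
def comp (c d : AlgCon L A) (a b : A) : Prop := ∃ z, c.r a z ∧ d.r z b

/-- The congruence generated by a binary relation. -/
def conGen (L : FirstOrder.Language.{0, 0}) {A : Type u} [L.Structure A]
    (R : A → A → Prop) : AlgCon L A where
  r := fun a b => ∀ c : AlgCon L A, (∀ x y, R x y → c.r x y) → c.r a b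
  refl := fun a _ _ => AlgCon.refl _ a
  symm := fun h c hc => c.symm (h c hc)
  trans := fun h1 h2 c hc => c.trans (h1 c hc) (h2 c hc)
  compat := fun f x y h c hc => c.compat f x y fun i => h i c hc

/-- Join of congruences in the congruence lattice. -/
def sup (c d : AlgCon L A) : AlgCon L A :=
  conGen L (fun a b => c.r a b ∨ d.r a b)

end AlgCon

/-- The principal congruence θ(a⃗, b⃗) generated by the pairs (aᵢ, bᵢ). -/
def thetaPairs {A : Type u} [L.Structure A] {n : ℕ} (a b : Fin n → A) : AlgCon L A :=
  AlgCon.conGen L (fun x y => ∃ i, x = a i ∧ y = b i)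

/-- The congruence θ(S) generated by S × S. -/
def thetaSet {A : Type u} [L.Structure A] (S : Set A) : AlgCon L A :=
  AlgCon.conGen L (fun x y => x ∈ S ∧ y ∈ S)

/-- `[a⃗, b⃗] ∈ θ`: all pairs (aᵢ, bᵢ) belong to the congruence θ. -/
def inCon {A : Type u} [L.Structure A] {n : ℕ} (θ : AlgCon L A) (a b : Fin n → A) : Prop :=
  ∀ i, θ.r (a i) (b i)

/-- θ and δ are complementary factor congruences: θ ∩ δ = Δ and θ ∘ δ = ∇. -/
def IsComplFC {A : Type u} [L.Structure A] (θ δ : AlgCon L A) : Prop :=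
  θ.inf δ = AlgCon.delta L A ∧ ∀ a b : A, θ.comp δ a b

/-- The set of factor congruences of `A`. -/
def FC (L : FirstOrder.Language.{0, 0}) (A : Type u) [L.Structure A] : Set (AlgCon L A) :=
  {θ | ∃ δ, IsComplFC θ δ}

/-- `S` is a Boolean sublattice of the congruence lattice of `A`: it contains Δ and ∇,
is closed under meet and join, is distributive, and every element has a complement in `S`. -/
def IsBooleanSublattice {A : Type u} [L.Structure A] (S : Set (AlgCon L A)) : Prop :=
  AlgCon.delta L A ∈ S ∧ AlgCon.nabla L A ∈ S ∧
  (∀ θ ∈ S, ∀ δ ∈ S, θ.inf δ ∈ S) ∧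
  (∀ θ ∈ S, ∀ δ ∈ S, θ.sup δ ∈ S) ∧
  (∀ θ ∈ S, ∀ δ ∈ S, ∀ γ ∈ S, θ.inf (δ.sup γ) = (θ.inf δ).sup (θ.inf γ)) ∧
  (∀ θ ∈ S, ∃ δ ∈ S, θ.inf δ = AlgCon.delta L A ∧ θ.sup δ = AlgCon.nabla L A)

/-- An identity (equation between two terms in finitely many variables). -/
structure Identity (L : FirstOrder.Language.{0, 0}) where
  nvars : ℕ
  lhs : L.Term (Fin nvars)
  rhs : L.Term (Fin nvars)

/-- An identity holds in an algebra. -/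
def Identity.Holds (e : Identity L) (A : Type u) [L.Structure A] : Prop :=
  ∀ v : Fin e.nvars → A, e.lhs.realize v = e.rhs.realize v

/-- Membership of an algebra in the variety axiomatized by the set of identities `E`. -/
def InVariety (E : Set (Identity L)) (A : Type u) [L.Structure A] : Prop :=
  ∀ e ∈ E, e.Holds A

/-- The data of the closed terms 0₁, …, 0ₙ and 1₁, …, 1ₙ. -/
structure ZeroOneData (L : FirstOrder.Language.{0, 0}) where
  n : ℕ
  npos : 0 < n
  zero : Fin n → L.Term Empty
  one : Fin n → L.Term Empty

/-- The interpretation of the tuple 0⃗ in an algebra. -/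
def ZeroOneData.zeroA (Z : ZeroOneData L) (A : Type u) [L.Structure A] : Fin Z.n → A :=
  fun i => (Z.zero i).realize Empty.elim

/-- The interpretation of the tuple 1⃗ in an algebra. -/
def ZeroOneData.oneA (Z : ZeroOneData L) (A : Type u) [L.Structure A] : Fin Z.n → A :=
  fun i => (Z.one i).realize Empty.elim

/-- `V ⊨ (0⃗ ≈ 1⃗) → x ≈ y`: `V` is a variety with 0⃗ and 1⃗. -/
def ZeroOneData.Separates (Z : ZeroOneData L) (E : Set (Identity L)) : Prop :=
  ∀ (A : Type u) [L.Structure A], InVariety E A →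
    (∀ i, Z.zeroA A i = Z.oneA A i) → Subsingleton A

/-- Product structure on `A × B`. -/
instance prodStructure (A : Type u) (B : Type u) [L.Structure A] [L.Structure B] :
    L.Structure (A × B) where
  funMap := fun f x => (funMap f (fun i => (x i).1), funMap f (fun i => (x i).2))
  RelMap := fun r x => RelMap r (fun i => (x i).1) ∧ RelMap r (fun i => (x i).2)

/-- A witness that `e⃗` is a central element of `A`: an isomorphism
`τ : A ≅ A₁ × A₂` with `A₁, A₂ ∈ V` and `τ(e⃗) = [0⃗, 1⃗]`. -/
structure CentralWitness (E : Set (Identity L)) (Z : ZeroOneData L)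
    (A : Type u) [L.Structure A] (e : Fin Z.n → A) : Type (u + 1) where
  A₁ : Type u
  A₂ : Type u
  [s₁ : L.Structure A₁]
  [s₂ : L.Structure A₂]
  mem₁ : InVariety E A₁
  mem₂ : InVariety E A₂
  iso : A ≃[L] (A₁ × A₂)
  he : ∀ i, iso (e i) = (Z.zeroA A₁ i, Z.oneA A₂ i)

/-- A witness that `e⃗` and `f⃗` are complementary central elements of `A`. -/
structure ComplCentralWitness (E : Set (Identity L)) (Z : ZeroOneData L)
    (A : Type u) [L.Structure A] (e f : Fin Z.n → A) extends
    CentralWitness E Z A e : Type (u + 1) where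
  hf : ∀ i, iso (f i) = (Z.oneA A₁ i, Z.zeroA A₂ i)

/-- `e⃗` is a central element of `A`. -/
def IsCentral (E : Set (Identity L)) (Z : ZeroOneData L)
    (A : Type u) [L.Structure A] (e : Fin Z.n → A) : Prop :=
  Nonempty (CentralWitness E Z A e)

/-- `e⃗ ⋄_A f⃗`: `e⃗` and `f⃗` are complementary central elements of `A`. -/
def CentDiamond (E : Set (Identity L)) (Z : ZeroOneData L)
    (A : Type u) [L.Structure A] (e f : Fin Z.n → A) : Prop :=
  Nonempty (ComplCentralWitness E Z A e f)

/-- `V` has Boolean factor congruences: for every `A ∈ V`, `FC(A)` is a Boolean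
sublattice of `Con(A)`. -/
def HasBFC (E : Set (Identity L)) : Prop :=
  ∀ (A : Type u) [L.Structure A], InVariety E A → IsBooleanSublattice (FC L A)

/-- `V` is stable by complements: every homomorphism between members of `V`
preserves complementary central elements. -/
def StableByComplements (E : Set (Identity L)) (Z : ZeroOneData L) : Prop :=
  ∀ (A B : Type u) [L.Structure A] [L.Structure B], InVariety E A → InVariety E B →
    ∀ (f : A →[L] B) (e g : Fin Z.n → A), CentDiamond E Z A e g →
      CentDiamond E Z B (fun i => f (e i)) (fun i => f (g i))

/-- A formula is existential: of the form ∃w⃗ ψ with ψ quantifier-free. -/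
def IsExistentialForm {α : Type*} (φ : L.Formula α) : Prop :=
  ∃ (m : ℕ) (ψ : L.BoundedFormula α m), ψ.IsQF ∧ φ = ψ.exs

/-- The formula λ(z⃗, x, y) satisfies the condition (R): for all `A, B ∈ V`,
`A × B ⊨ λ([0⃗,1⃗], (a,c), (b,d))` iff `c = d`. -/
def RightFormulaWorks (E : Set (Identity L)) (Z : ZeroOneData L)
    (φ : L.Formula ((Fin Z.n) ⊕ (Fin 2))) : Prop :=
  ∀ (A B : Type u) [L.Structure A] [L.Structure B], InVariety E A → InVariety E B →
    ∀ (a b : A) (c d : B),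
      (φ.Realize (M := A × B)
        (Sum.elim (fun i => (Z.zeroA A i, Z.oneA B i)) ![(a, c), (b, d)]) ↔ c = d)

/-- The formula ρ(z⃗, x, y) satisfies the condition (L): for all `A, B ∈ V`,
`A × B ⊨ ρ([0⃗,1⃗], (a,c), (b,d))` iff `a = b`. -/
def LeftFormulaWorks (E : Set (Identity L)) (Z : ZeroOneData L)
    (φ : L.Formula ((Fin Z.n) ⊕ (Fin 2))) : Prop :=
  ∀ (A B : Type u) [L.Structure A] [L.Structure B], InVariety E A → InVariety E B →
    ∀ (a b : A) (c d : B),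
      (φ.Realize (M := A × B)
        (Sum.elim (fun i => (Z.zeroA A i, Z.oneA B i)) ![(a, c), (b, d)]) ↔ a = b)

/-- `V` has right existentially definable factor congruences. -/
def HasRexDFC (E : Set (Identity L)) (Z : ZeroOneData L) : Prop :=
  HasBFC.{u} E ∧ ∃ φ : L.Formula ((Fin Z.n) ⊕ (Fin 2)),
    IsExistentialForm φ ∧ RightFormulaWorks.{u} E Z φ

/-- `V` has left existentially definable factor congruences. -/
def HasLexDFC (E : Set (Identity L)) (Z : ZeroOneData L) : Prop :=
  HasBFC.{u} E ∧ ∃ φ : L.Formula ((Fin Z.n) ⊕ (Fin 2)),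
    IsExistentialForm φ ∧ LeftFormulaWorks.{u} E Z φ

/-- `(θ, δ)` is the pair of complementary factor congruences associated with the
central element `e⃗`, i.e. `θ ⋄ δ`, `[e⃗,0⃗] ∈ θ` and `[e⃗,1⃗] ∈ δ`. -/
def PairFor (Z : ZeroOneData L) (A : Type u) [L.Structure A]
    (e : Fin Z.n → A) (θ δ : AlgCon L A) : Prop :=
  IsComplFC θ δ ∧ inCon θ e (Z.zeroA A) ∧ inCon δ e (Z.oneA A)

/-- `a⃗ = e⃗ ∧ f⃗` in the center: `[a⃗,0⃗] ∈ θ_{0,e} ∩ θ_{0,f}` and `[a⃗,1⃗] ∈ θ_{1,e} ∨ θ_{1,f}`. -/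
def IsMeetOf (Z : ZeroOneData L) (A : Type u) [L.Structure A]
    (e f a : Fin Z.n → A) : Prop :=
  ∃ θ₀e θ₁e θ₀f θ₁f : AlgCon L A, PairFor Z A e θ₀e θ₁e ∧ PairFor Z A f θ₀f θ₁f ∧
    inCon (θ₀e.inf θ₀f) a (Z.zeroA A) ∧ inCon (θ₁e.sup θ₁f) a (Z.oneA A)

/-- `a⃗ = e⃗ ∨ f⃗` in the center: `[a⃗,0⃗] ∈ θ_{0,e} ∨ θ_{0,f}` and `[a⃗,1⃗] ∈ θ_{1,e} ∩ θ_{1,f}`. -/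
def IsJoinOf (Z : ZeroOneData L) (A : Type u) [L.Structure A]
    (e f a : Fin Z.n → A) : Prop :=
  ∃ θ₀e θ₁e θ₀f θ₁f : AlgCon L A, PairFor Z A e θ₀e θ₁e ∧ PairFor Z A f θ₀f θ₁f ∧
    inCon (θ₀e.sup θ₀f) a (Z.zeroA A) ∧ inCon (θ₁e.inf θ₁f) a (Z.oneA A)

/-- `a⃗ = e⃗^c` in the center: `[a⃗,1⃗] ∈ θ_{0,e}` and `[a⃗,0⃗] ∈ θ_{1,e}`. -/
def IsComplOf (Z : ZeroOneData L) (A : Type u) [L.Structure A]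
    (e a : Fin Z.n → A) : Prop :=
  ∃ θ₀e θ₁e : AlgCon L A, PairFor Z A e θ₀e θ₁e ∧
    inCon θ₀e a (Z.oneA A) ∧ inCon θ₁e a (Z.zeroA A)

section Quotient

variable {A : Type u} [L.Structure A]

/-- The setoid underlying a congruence. -/
def AlgCon.setoid (c : AlgCon L A) : Setoid A :=
  ⟨c.r, ⟨c.refl, fun h => c.symm h, fun h1 h2 => c.trans h1 h2⟩⟩

/-- The quotient algebra `A/θ`. -/
def ConQuot (c : AlgCon L A) : Type u := Quotient c.setoid

/-- The class of `a` in `A/θ`. -/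
def ConQuot.mk (c : AlgCon L A) (a : A) : ConQuot c := Quotient.mk c.setoid a

noncomputable instance conQuotStructure (c : AlgCon L A) : L.Structure (ConQuot c) where
  funMap := fun f x => ConQuot.mk c (funMap f (fun i => (Quotient.out (α := A) (s := c.setoid) (x i))))
  RelMap := fun r x => ∃ as : Fin _ → A, (∀ i, ConQuot.mk c (as i) = x i) ∧ RelMap r as

theorem conQuot_funMap_mk (c : AlgCon L A) {m : ℕ} (f : L.Functions m) (as : Fin m → A) :
    funMap f (fun i => ConQuot.mk c (as i)) = ConQuot.mk c (funMap f as) := by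
  show ConQuot.mk c _ = ConQuot.mk c _
  apply Quotient.sound
  apply c.compat
  intro i
  exact Quotient.mk_out (s := c.setoid) (as i)

/-- The canonical quotient homomorphism `A → A/θ`. -/
def conQuotMk (c : AlgCon L A) : A →[L] ConQuot c where
  toFun := ConQuot.mk c
  map_fun' := fun f x => (conQuot_funMap_mk c f x).symm
  map_rel' := fun _r x h => ⟨x, fun _ => rfl, h⟩

end Quotient

end Paper



namespace Paper

section Helpers

variable {L : FirstOrder.Language.{0, 0}} {A : Type u} [L.Structure A]

lemma AlgCon.r_iff {c d : AlgCon L A} (h : c = d) (a b : A) : c.r a b ↔ d.r a b := by rw [h]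

lemma delta_r {a b : A} (h : (AlgCon.delta L A).r a b) : a = b := h

lemma AlgCon.sup_left {c d : AlgCon L A} {a b : A} (h : c.r a b) : (c.sup d).r a b :=
  fun γ hγ => hγ a b (Or.inl h)

lemma AlgCon.sup_right {c d : AlgCon L A} {a b : A} (h : d.r a b) : (c.sup d).r a b :=
  fun γ hγ => hγ a b (Or.inr h)

lemma AlgCon.sup_elim {c d γ : AlgCon L A} {a b : A} (h : (c.sup d).r a b)
    (h1 : ∀ x y, c.r x y → γ.r x y) (h2 : ∀ x y, d.r x y → γ.r x y) : γ.r a b :=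
  h γ (fun x y hxy => hxy.elim (h1 x y) (h2 x y))

lemma IsComplFC.symm' {θ δ : AlgCon L A} (h : IsComplFC θ δ) : IsComplFC δ θ := by
  obtain ⟨h1, h2⟩ := h
  refine ⟨AlgCon.ext' fun a b => ?_, fun a b => ?_⟩
  · constructor
    · intro hab
      exact delta_r ((AlgCon.r_iff h1 a b).1 ⟨hab.2, hab.1⟩)
    · intro h'
      obtain rfl := delta_r h'
      exact ⟨δ.refl a, θ.refl a⟩
  · obtain ⟨z, hz1, hz2⟩ := h2 b a
    exact ⟨z, δ.symm hz2, θ.symm hz1⟩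

lemma mem_FC_left {θ δ : AlgCon L A} (h : IsComplFC θ δ) : θ ∈ FC L A := ⟨δ, h⟩

lemma mem_FC_right {θ δ : AlgCon L A} (h : IsComplFC θ δ) : δ ∈ FC L A := ⟨θ, h.symm'⟩

lemma ConQuot.mk_eq_mk {c : AlgCon L A} {a b : A} :
    ConQuot.mk c a = ConQuot.mk c b ↔ c.r a b :=
  ⟨fun h => Quotient.exact h, fun h => Quotient.sound h⟩

lemma quot_inVariety {E : Set (Identity L)} (hA : InVariety E A) (c : AlgCon L A) :
    InVariety E (ConQuot c) := by
  intro id hid v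
  have hv : v = (conQuotMk c) ∘ (fun i => Quotient.out (v i)) := by
    funext i
    exact (Quotient.out_eq (v i)).symm
  rw [hv, HomClass.realize_term, HomClass.realize_term, hA id hid]

lemma quot_zeroA (Z : ZeroOneData L) (c : AlgCon L A) (i : Fin Z.n) :
    Z.zeroA (ConQuot c) i = ConQuot.mk c (Z.zeroA A i) := by
  have h : (Empty.elim : Empty → ConQuot c) = (conQuotMk c) ∘ (Empty.elim : Empty → A) :=
    funext fun x => x.elim
  show (Z.zero i).realize (Empty.elim : Empty → ConQuot c) = _
  rw [h, HomClass.realize_term]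
  rfl

lemma quot_oneA (Z : ZeroOneData L) (c : AlgCon L A) (i : Fin Z.n) :
    Z.oneA (ConQuot c) i = ConQuot.mk c (Z.oneA A i) := by
  have h : (Empty.elim : Empty → ConQuot c) = (conQuotMk c) ∘ (Empty.elim : Empty → A) :=
    funext fun x => x.elim
  show (Z.one i).realize (Empty.elim : Empty → ConQuot c) = _
  rw [h, HomClass.realize_term]
  rfl

lemma r_of_zero_one {E : Set (Identity L)} (Z : ZeroOneData L)
    (hsep : ZeroOneData.Separates.{u} Z E) (hA : InVariety E A) (c : AlgCon L A)
    (h : ∀ i, c.r (Z.zeroA A i) (Z.oneA A i)) (a b : A) : c.r a b := by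
  have hq : InVariety E (ConQuot c) := quot_inVariety hA c
  have hsub : Subsingleton (ConQuot c) := hsep (ConQuot c) hq (fun i => by
    rw [quot_zeroA, quot_oneA]
    exact ConQuot.mk_eq_mk.2 (h i))
  exact ConQuot.mk_eq_mk.1 (Subsingleton.elim _ _)

lemma sub_of_dist {θ' θ δ' : AlgCon L A}
    (hdist : θ'.inf (θ.sup δ') = (θ'.inf θ).sup (θ'.inf δ'))
    (hΔ : θ'.inf δ' = AlgCon.delta L A)
    (hnab : ∀ a b, (θ.sup δ').r a b) :
    ∀ x y, θ'.r x y → θ.r x y := by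
  intro x y hxy
  have h1 : (θ'.inf (θ.sup δ')).r x y := ⟨hxy, hnab x y⟩
  rw [hdist] at h1
  refine AlgCon.sup_elim h1 (fun u v h => h.2) (fun u v h => ?_)
  obtain rfl := delta_r ((AlgCon.r_iff hΔ u v).1 h)
  exact θ.refl u

lemma pair_unique {E : Set (Identity L)} {Z : ZeroOneData L}
    (hsep : ZeroOneData.Separates.{u} Z E) (hbfc : IsBooleanSublattice (FC L A))
    (hA : InVariety E A) {e : Fin Z.n → A} {θ δ θ' δ' : AlgCon L A}
    (h : PairFor Z A e θ δ) (h' : PairFor Z A e θ' δ') : θ = θ' ∧ δ = δ' := by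
  obtain ⟨-, -, -, -, hdist, -⟩ := hbfc
  have Fθ := mem_FC_left h.1
  have Fδ := mem_FC_right h.1
  have Fθ' := mem_FC_left h'.1
  have Fδ' := mem_FC_right h'.1
  have nab1 : ∀ a b, (θ.sup δ').r a b :=
    r_of_zero_one Z hsep hA _ (fun i =>
      (θ.sup δ').trans (AlgCon.sup_left (θ.symm (h.2.1 i))) (AlgCon.sup_right (h'.2.2 i)))
  have nab2 : ∀ a b, (θ'.sup δ).r a b :=
    r_of_zero_one Z hsep hA _ (fun i =>
      (θ'.sup δ).trans (AlgCon.sup_left (θ'.symm (h'.2.1 i))) (AlgCon.sup_right (h.2.2 i)))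
  have nab3 : ∀ a b, (δ.sup θ').r a b :=
    r_of_zero_one Z hsep hA _ (fun i =>
      (δ.sup θ').trans (AlgCon.sup_right (θ'.symm (h'.2.1 i))) (AlgCon.sup_left (h.2.2 i)))
  have nab4 : ∀ a b, (δ'.sup θ).r a b :=
    r_of_zero_one Z hsep hA _ (fun i =>
      (δ'.sup θ).trans (AlgCon.sup_right (θ.symm (h.2.1 i))) (AlgCon.sup_left (h'.2.2 i)))
  have le1 : ∀ x y, θ'.r x y → θ.r x y :=
    sub_of_dist (hdist θ' Fθ' θ Fθ δ' Fδ') h'.1.1 nab1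
  have le2 : ∀ x y, θ.r x y → θ'.r x y :=
    sub_of_dist (hdist θ Fθ θ' Fθ' δ Fδ) h.1.1 nab2
  have le3 : ∀ x y, δ'.r x y → δ.r x y :=
    sub_of_dist (hdist δ' Fδ' δ Fδ θ' Fθ') h'.1.symm'.1 nab3
  have le4 : ∀ x y, δ.r x y → δ'.r x y :=
    sub_of_dist (hdist δ Fδ δ' Fδ' θ Fθ) h.1.symm'.1 nab4
  exact ⟨AlgCon.ext' fun a b => ⟨le2 a b, le1 a b⟩,
    AlgCon.ext' fun a b => ⟨le4 a b, le3 a b⟩⟩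

lemma realize_prod {A₁ A₂ : Type u} [L.Structure A₁] [L.Structure A₂] {α : Type*}
    (t : L.Term α) (v : α → A₁ × A₂) :
    t.realize v = (t.realize (fun i => (v i).1), t.realize (fun i => (v i).2)) := by
  induction t with
  | var i => rfl
  | func f ts ih =>
    show (funMap f fun i => (ts i).realize v) = _
    have h1 : (funMap f fun i => (ts i).realize v : A₁ × A₂)
        = (funMap f (fun i => ((ts i).realize v).1),
           funMap f (fun i => ((ts i).realize v).2)) := rfl
    rw [h1]
    have h2 : (fun i => ((ts i).realize v).1) = fun i => (ts i).realize (fun j => (v j).1) := by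
      funext i; rw [ih i]
    have h3 : (fun i => ((ts i).realize v).2) = fun i => (ts i).realize (fun j => (v j).2) := by
      funext i; rw [ih i]
    rw [h2, h3]
    rfl

lemma central_pair_exists {E : Set (Identity L)} {Z : ZeroOneData L} {e : Fin Z.n → A}
    (he : IsCentral E Z A e) : ∃ θ δ : AlgCon L A, PairFor Z A e θ δ := by
  obtain ⟨W⟩ := he
  letI := W.s₁
  letI := W.s₂
  have key : ∀ t : L.Term Empty,
      W.iso (t.realize (Empty.elim : Empty → A))
        = (t.realize (Empty.elim : Empty → W.A₁), t.realize (Empty.elim : Empty → W.A₂)) := by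
    intro t
    have h : (W.iso : A → W.A₁ × W.A₂) ∘ (Empty.elim : Empty → A)
        = (Empty.elim : Empty → W.A₁ × W.A₂) := funext fun x => x.elim
    have h2 := HomClass.realize_term (g := W.iso) (t := t) (v := (Empty.elim : Empty → A))
    rw [h] at h2
    rw [← h2, realize_prod]
    have e1 : (fun i => ((Empty.elim : Empty → W.A₁ × W.A₂) i).1)
        = (Empty.elim : Empty → W.A₁) := funext fun x => x.elim
    have e2 : (fun i => ((Empty.elim : Empty → W.A₁ × W.A₂) i).2)
        = (Empty.elim : Empty → W.A₂) := funext fun x => x.elim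
    rw [e1, e2]
  have hcompat1 : ∀ {m : ℕ} (g : L.Functions m) (x y : Fin m → A),
      (∀ i, (W.iso (x i)).1 = (W.iso (y i)).1) →
      (W.iso (funMap g x)).1 = (W.iso (funMap g y)).1 := by
    intro m g x y hxy
    rw [HomClass.map_fun, HomClass.map_fun]
    show funMap g (fun i => (W.iso (x i)).1) = funMap g (fun i => (W.iso (y i)).1)
    exact congrArg _ (funext hxy)
  have hcompat2 : ∀ {m : ℕ} (g : L.Functions m) (x y : Fin m → A),
      (∀ i, (W.iso (x i)).2 = (W.iso (y i)).2) →
      (W.iso (funMap g x)).2 = (W.iso (funMap g y)).2 := by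
    intro m g x y hxy
    rw [HomClass.map_fun, HomClass.map_fun]
    show funMap g (fun i => (W.iso (x i)).2) = funMap g (fun i => (W.iso (y i)).2)
    exact congrArg _ (funext hxy)
  refine ⟨⟨fun x y => (W.iso x).1 = (W.iso y).1, fun _ => rfl, Eq.symm, Eq.trans,
      hcompat1⟩,
    ⟨fun x y => (W.iso x).2 = (W.iso y).2, fun _ => rfl, Eq.symm, Eq.trans,
      hcompat2⟩, ⟨?_, ?_⟩, ?_, ?_⟩
  · apply AlgCon.ext'
    intro x y
    constructor
    · rintro ⟨hx1, hx2⟩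
      exact W.iso.injective (Prod.ext hx1 hx2)
    · intro h'
      obtain rfl := delta_r h'
      exact ⟨rfl, rfl⟩
  · intro x y
    refine ⟨W.iso.symm ((W.iso x).1, (W.iso y).2), ?_, ?_⟩
    · show (W.iso x).1 = (W.iso (W.iso.symm ((W.iso x).1, (W.iso y).2))).1
      rw [W.iso.apply_symm_apply]
    · show (W.iso (W.iso.symm ((W.iso x).1, (W.iso y).2))).2 = (W.iso y).2
      rw [W.iso.apply_symm_apply]
  · intro i
    show (W.iso (e i)).1 = (W.iso ((Z.zero i).realize (Empty.elim : Empty → A))).1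
    rw [W.he i, key (Z.zero i)]
    rfl
  · intro i
    show (W.iso (e i)).2 = (W.iso ((Z.one i).realize (Empty.elim : Empty → A))).2
    rw [W.he i, key (Z.one i)]
    rfl

lemma join_compl {θ₀e θ₁e θ₀f θ₁f : AlgCon L A}
    (hbfc : IsBooleanSublattice (FC L A))
    (he : IsComplFC θ₀e θ₁e) (hf : IsComplFC θ₀f θ₁f) :
    IsComplFC (θ₀e.sup θ₀f) (θ₁e.inf θ₁f) := by
  obtain ⟨-, -, hinf, hsup, hdist, -⟩ := hbfc
  have F0e := mem_FC_left he
  have F1e := mem_FC_right he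
  have F0f := mem_FC_left hf
  have F1f := mem_FC_right hf
  have FΘ₀ : θ₀e.sup θ₀f ∈ FC L A := hsup _ F0e _ F0f
  have FΘ₁ : θ₁e.inf θ₁f ∈ FC L A := hinf _ F1e _ F1f
  have hmeet : (θ₀e.sup θ₀f).inf (θ₁e.inf θ₁f) = AlgCon.delta L A := by
    apply AlgCon.ext'
    intro x y
    constructor
    · rintro ⟨h0, h1⟩
      have hx : ((θ₁e.inf θ₁f).inf (θ₀e.sup θ₀f)).r x y := ⟨h1, h0⟩
      rw [hdist _ FΘ₁ _ F0e _ F0f] at hx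
      exact AlgCon.sup_elim hx
        (fun u v huv => ((AlgCon.r_iff he.1 u v).1 ⟨huv.2, huv.1.1⟩ :
          (AlgCon.delta L A).r u v))
        (fun u v huv => ((AlgCon.r_iff hf.1 u v).1 ⟨huv.2, huv.1.2⟩ :
          (AlgCon.delta L A).r u v))
    · intro h'
      obtain rfl := delta_r h'
      exact ⟨(θ₀e.sup θ₀f).refl x, (θ₁e.inf θ₁f).refl x⟩
  have hjoin : ∀ a b, ((θ₀e.sup θ₀f).sup (θ₁e.inf θ₁f)).r a b := by
    intro a b
    have ha : ((θ₀e.sup θ₀f).sup θ₁e).r a b := by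
      obtain ⟨z, hz1, hz2⟩ := he.2 a b
      exact ((θ₀e.sup θ₀f).sup θ₁e).trans
        (AlgCon.sup_left (AlgCon.sup_left hz1)) (AlgCon.sup_right hz2)
    have hb : ((θ₀e.sup θ₀f).sup θ₁f).r a b := by
      obtain ⟨z, hz1, hz2⟩ := hf.2 a b
      exact ((θ₀e.sup θ₀f).sup θ₁f).trans
        (AlgCon.sup_left (AlgCon.sup_right hz1)) (AlgCon.sup_right hz2)
    have h1 : (((θ₀e.sup θ₀f).sup θ₁e).inf ((θ₀e.sup θ₀f).sup θ₁f)).r a b := ⟨ha, hb⟩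
    have FS1 : (θ₀e.sup θ₀f).sup θ₁e ∈ FC L A := hsup _ FΘ₀ _ F1e
    rw [hdist _ FS1 _ FΘ₀ _ F1f] at h1
    refine AlgCon.sup_elim h1 (fun u v huv => AlgCon.sup_left huv.2) (fun u v huv => ?_)
    have h2 : (θ₁f.inf ((θ₀e.sup θ₀f).sup θ₁e)).r u v := ⟨huv.2, huv.1⟩
    rw [hdist _ F1f _ FΘ₀ _ F1e] at h2
    exact AlgCon.sup_elim h2 (fun s t hst => AlgCon.sup_left hst.2)
      (fun s t hst => AlgCon.sup_right (⟨hst.2, hst.1⟩ : (θ₁e.inf θ₁f).r s t))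
  obtain ⟨γ, hγ⟩ := id FΘ₁
  have Fγ := mem_FC_right hγ
  have hγΘ : γ = θ₀e.sup θ₀f := by
    apply AlgCon.ext'
    intro x y
    constructor
    · intro hx
      have h1 : (γ.inf ((θ₀e.sup θ₀f).sup (θ₁e.inf θ₁f))).r x y := ⟨hx, hjoin x y⟩
      rw [hdist _ Fγ _ FΘ₀ _ FΘ₁] at h1
      refine AlgCon.sup_elim h1 (fun u v huv => huv.2) (fun u v huv => ?_)
      obtain rfl := delta_r ((AlgCon.r_iff hγ.1 u v).1 ⟨huv.2, huv.1⟩)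
      exact (θ₀e.sup θ₀f).refl u
    · intro hx
      have hnab : ((θ₁e.inf θ₁f).sup γ).r x y := by
        obtain ⟨z, hz1, hz2⟩ := hγ.2 x y
        exact ((θ₁e.inf θ₁f).sup γ).trans (AlgCon.sup_left hz1) (AlgCon.sup_right hz2)
      have h1 : ((θ₀e.sup θ₀f).inf ((θ₁e.inf θ₁f).sup γ)).r x y := ⟨hx, hnab⟩
      rw [hdist _ FΘ₀ _ FΘ₁ _ Fγ] at h1
      refine AlgCon.sup_elim h1 (fun u v huv => ?_) (fun u v huv => huv.2)
      obtain rfl := delta_r ((AlgCon.r_iff hmeet u v).1 huv)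
      exact γ.refl u
  refine ⟨hmeet, fun a b => ?_⟩
  obtain ⟨z, hz1, hz2⟩ := hγ.2 b a
  refine ⟨z, ?_, (θ₁e.inf θ₁f).symm hz1⟩
  rw [← hγΘ]
  exact γ.symm hz2

lemma join_props {Z : ZeroOneData L} {e f a : Fin Z.n → A} {θ₀e θ₁e θ₀f θ₁f : AlgCon L A}
    (hbfc : IsBooleanSublattice (FC L A))
    (hpe : PairFor Z A e θ₀e θ₁e) (hpf : PairFor Z A f θ₀f θ₁f)
    (H0 : inCon (θ₀e.sup θ₀f) a (Z.zeroA A)) (H1 : inCon (θ₁e.inf θ₁f) a (Z.oneA A)) :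
    inCon θ₁e (Z.oneA A) a ∧ inCon θ₀e a f := by
  obtain ⟨-, -, -, -, hdist, -⟩ := hbfc
  refine ⟨fun i => θ₁e.symm (H1 i).1, fun i => ?_⟩
  have h1f : θ₁f.r (a i) (f i) := θ₁f.trans (H1 i).2 (θ₁f.symm (hpf.2.2 i))
  have h0 : (θ₀e.sup θ₀f).r (a i) (f i) :=
    (θ₀e.sup θ₀f).trans (H0 i) (AlgCon.sup_right (θ₀f.symm (hpf.2.1 i)))
  have h2 : (θ₁f.inf (θ₀e.sup θ₀f)).r (a i) (f i) := ⟨h1f, h0⟩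
  rw [hdist _ (mem_FC_right hpf.1) _ (mem_FC_left hpe.1) _ (mem_FC_left hpf.1)] at h2
  refine AlgCon.sup_elim h2 (fun u v huv => huv.2) (fun u v huv => ?_)
  obtain rfl := delta_r ((AlgCon.r_iff hpf.1.1 u v).1 ⟨huv.2, huv.1⟩)
  exact θ₀e.refl u

end Helpers

end Paper

open Paper


/-- characterization of the supremum in the center:
`a⃗ = e⃗ ∨ f⃗` iff `[1⃗,a⃗] ∈ θ_{1,e}` and `[a⃗,f⃗] ∈ θ_{0,e}`. -/
theorem statement10 (L : FirstOrder.Language.{0, 0}) [L.IsAlgebraic]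
    [Finite (Σ n, L.Functions n)]
    (E : Set (Identity L)) (Z : ZeroOneData L)
    (hsep : ZeroOneData.Separates.{u} Z E) (hbfc : HasBFC.{u} E)
    (A : Type u) [L.Structure A] (hA : InVariety E A)
    (e f : Fin Z.n → A) (he : IsCentral E Z A e) (hf : IsCentral E Z A f)
    (a : Fin Z.n → A) :
    IsJoinOf Z A e f a ↔
      ∀ θ₀e θ₁e : AlgCon L A, PairFor Z A e θ₀e θ₁e →
        inCon θ₁e (Z.oneA A) a ∧ inCon θ₀e a f := by
  have hB := hbfc A hA
  constructor
  · rintro ⟨θ₀e, θ₁e, θ₀f, θ₁f, hpe, hpf, H0, H1⟩ θ₀' θ₁' hp'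
    obtain ⟨rfl, rfl⟩ := pair_unique hsep hB hA hp' hpe
    exact join_props hB hpe hpf H0 H1
  · intro h
    obtain ⟨θ₀e, θ₁e, hpe⟩ := central_pair_exists he
    obtain ⟨θ₀f, θ₁f, hpf⟩ := central_pair_exists hf
    obtain ⟨h1, h2⟩ := h θ₀e θ₁e hpe
    have hC := join_compl hB hpe.1 hpf.1
    have hx : ∀ i : Fin Z.n, ∃ z, (θ₀e.sup θ₀f).r (Z.zeroA A i) z
        ∧ (θ₁e.inf θ₁f).r z (Z.oneA A i) := fun i => hC.2 _ _
    choose x hx0 hx1 using hx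
    have hxj := join_props hB hpe hpf (fun i => (θ₀e.sup θ₀f).symm (hx0 i)) hx1
    have hax : ∀ i, a i = x i := by
      intro i
      have hd : (AlgCon.delta L A).r (a i) (x i) := by
        rw [← hpe.1.1]
        exact ⟨θ₀e.trans (h2 i) (θ₀e.symm (hxj.2 i)),
          θ₁e.trans (θ₁e.symm (h1 i)) (hxj.1 i)⟩
      exact hd
    refine ⟨θ₀e, θ₁e, θ₀f, θ₁f, hpe, hpf, fun i => ?_, fun i => ?_⟩
    · rw [hax i]
      exact (θ₀e.sup θ₀f).symm (hx0 i)
    · rw [hax i]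
      exact hx1 i
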